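/- Let Φ and Ψ be real 2-forms on a 4-manifold M with Φ∧Φ = Ψ∧Ψ nowhere zero and Φ∧Ψ = 0, and suppose dΦ = τ∧Φ and dΨ = τ∧Ψ for some 1-form τ. Then the almost complex structure J defined by Ψ(·,·) = -Φ(J·,·) is integrable. -/

import Mathlib

/-! Local model of a smooth `4`-manifold: `V4 = ℝ⁴` (a chart domain; integrability is a
local statement). -/

abbrev V4 := Fin 4 → ℝ

/-- Lie bracket of vector fields on `V4`. -/
noncomputable def vbracket (X Y : V4 → V4) (x : V4) : V4 :=
  fderiv ℝ Y x (X x) - fderiv ℝ X x (Y x)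

/-- Exterior differential of a `2`-form (field of antisymmetric bilinear maps) on
constant vector fields. -/
noncomputable def extD2 (Φ : V4 → V4 → V4 → ℝ) (x u v w : V4) : ℝ :=
  fderiv ℝ (fun y => Φ y v w) x u - fderiv ℝ (fun y => Φ y u w) x v +
    fderiv ℝ (fun y => Φ y u v) x w

/-- The wedge product `τ ∧ Φ` of a `1`-form and a `2`-form. -/
def wedge12 (τ : V4 → V4 → ℝ) (Φ : V4 → V4 → V4 → ℝ) (x u v w : V4) : ℝ :=
  τ x u * Φ x v w - τ x v * Φ x u w + τ x w * Φ x u v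

/-- The coefficient of the `4`-form `Φ ∧ Ψ` with respect to `dx⁰∧dx¹∧dx²∧dx³`
(a top form on `ℝ⁴` is determined by its value on the standard basis). -/
def wedge22 (Φ Ψ : V4 → V4 → V4 → ℝ) (x : V4) : ℝ :=
  let e : Fin 4 → V4 := fun i => Pi.single i 1
  Φ x (e 0) (e 1) * Ψ x (e 2) (e 3) - Φ x (e 0) (e 2) * Ψ x (e 1) (e 3) +
    Φ x (e 0) (e 3) * Ψ x (e 1) (e 2) + Φ x (e 1) (e 2) * Ψ x (e 0) (e 3) -
    Φ x (e 1) (e 3) * Ψ x (e 0) (e 2) + Φ x (e 2) (e 3) * Ψ x (e 0) (e 1)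

/-- A smooth `2`-form on `V4`. -/
structure IsSmoothTwoForm (Φ : V4 → V4 → V4 → ℝ) : Prop where
  linear_left : ∀ x v, IsLinearMap ℝ fun u => Φ x u v
  linear_right : ∀ x u, IsLinearMap ℝ (Φ x u)
  alt : ∀ x u v, Φ x u v = -Φ x v u
  smooth : ∀ u v, ContDiff ℝ (⊤ : ℕ∞) fun x => Φ x u v

noncomputable section Stmt8Aux

/-- Standard basis of `V4`. -/
def e4 : Fin 4 → V4 := fun i => Pi.single i 1

lemma vec_rep (u : V4) : u = ∑ j : Fin 4, u j • e4 j := by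
  funext k
  simp [e4, Finset.sum_apply, Pi.single_apply]

lemma lin_expand {f : V4 → ℝ} (hf : IsLinearMap ℝ f) (u : V4) :
    f u = ∑ i : Fin 4, u i * f (e4 i) := by
  let L := IsLinearMap.mk' f hf
  have h0 : f u = L u := rfl
  rw [h0]
  conv_lhs => rw [vec_rep u]
  rw [map_sum]
  exact Finset.sum_congr rfl fun i _ => by rw [map_smul]; rfl

lemma form_rep (Φ : V4 → V4 → V4 → ℝ) (hΦ : IsSmoothTwoForm Φ) (x u v : V4) :
    Φ x u v = ∑ i : Fin 4, ∑ j : Fin 4, u i * (v j * Φ x (e4 i) (e4 j)) := by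
  rw [lin_expand (hΦ.linear_left x v) u]
  exact Finset.sum_congr rfl fun i _ => by
    rw [lin_expand (hΦ.linear_right x (e4 i)) v, Finset.mul_sum]

lemma form_dot (Φ : V4 → V4 → V4 → ℝ) (hΦ : IsSmoothTwoForm Φ) (x u v : V4) :
    Φ x u v = dotProduct u (Matrix.mulVec (Matrix.of fun i j => Φ x (e4 i) (e4 j)) v) := by
  rw [form_rep Φ hΦ x u v]
  simp [dotProduct, Matrix.mulVec, Finset.mul_sum]
  exact Finset.sum_congr rfl fun i _ => Finset.sum_congr rfl fun j _ => by ring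

/-- A `2`-form with nonzero Pfaffian is nondegenerate. -/
lemma form_nondeg (Φ : V4 → V4 → V4 → ℝ) (hΦ : IsSmoothTwoForm Φ) (x : V4)
    (hne : (Φ x (e4 0) (e4 1) * Φ x (e4 2) (e4 3) - Φ x (e4 0) (e4 2) * Φ x (e4 1) (e4 3) +
      Φ x (e4 0) (e4 3) * Φ x (e4 1) (e4 2)) ≠ 0)
    (v : V4) (hv : ∀ w, Φ x v w = 0) : v = 0 := by
  set M : Matrix (Fin 4) (Fin 4) ℝ := Matrix.of fun i j => Φ x (e4 i) (e4 j) with hM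
  have halt : ∀ i j : Fin 4, M i j = - M j i := fun i j => hΦ.alt x (e4 i) (e4 j)
  have hlit : M = Matrix.of ![![0, M 0 1, M 0 2, M 0 3], ![-(M 0 1), 0, M 1 2, M 1 3],
      ![-(M 0 2), -(M 1 2), 0, M 2 3], ![-(M 0 3), -(M 1 3), -(M 2 3), 0]] := by
    ext i j
    fin_cases i <;> fin_cases j <;>
      simp <;>
      linarith [halt 0 0, halt 1 1, halt 2 2, halt 3 3, halt 1 0, halt 2 0, halt 3 0,
        halt 2 1, halt 3 1, halt 3 2]
  have hdet : M.det = (M 0 1 * M 2 3 - M 0 2 * M 1 3 + M 0 3 * M 1 2)^2 := by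
    conv_lhs => rw [hlit]
    simp [Matrix.det_succ_row_zero, Fin.sum_univ_succ, Fin.succAbove,
      show (Fin.castSucc 2 : Fin 4) = 2 by rfl]
    ring
  have hdetne : M.det ≠ 0 := by
    rw [hdet]
    exact pow_ne_zero 2 hne
  refine (Matrix.nondegenerate_of_det_ne_zero hdetne).eq_zero_of_ortho fun w => ?_
  rw [← form_dot Φ hΦ x v w]
  exact hv w

/-- The bilinear form packaged as a continuous linear map valued map. -/
def formClm (Φ : V4 → V4 → V4 → ℝ) (hΦ : IsSmoothTwoForm Φ) (y : V4) :
    V4 →L[ℝ] V4 →L[ℝ] ℝ :=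
  LinearMap.toContinuousLinearMap
    { toFun := fun u => LinearMap.toContinuousLinearMap
        (IsLinearMap.mk' (Φ y u) (hΦ.linear_right y u))
      map_add' := fun u u' => by
        ext v
        exact (hΦ.linear_left y v).map_add u u'
      map_smul' := fun c u => by
        ext v
        exact (hΦ.linear_left y v).map_smul c u }

lemma formClm_apply (Φ : V4 → V4 → V4 → ℝ) (hΦ : IsSmoothTwoForm Φ) (y u v : V4) :
    formClm Φ hΦ y u v = Φ y u v := rfl

lemma formClm_contDiff (Φ : V4 → V4 → V4 → ℝ) (hΦ : IsSmoothTwoForm Φ) :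
    ContDiff ℝ (⊤ : ℕ∞) (formClm Φ hΦ) := by
  rw [contDiff_clm_apply_iff]
  intro u
  rw [contDiff_clm_apply_iff]
  intro v
  exact hΦ.smooth u v

lemma fderiv_formClm_apply (Φ : V4 → V4 → V4 → ℝ) (hΦ : IsSmoothTwoForm Φ) (x u v z : V4) :
    fderiv ℝ (formClm Φ hΦ) x z u v = fderiv ℝ (fun y => Φ y u v) x z := by
  have h1 : HasFDerivAt (formClm Φ hΦ) (fderiv ℝ (formClm Φ hΦ) x) x :=
    ((formClm_contDiff Φ hΦ).differentiable (by simp) x).hasFDerivAt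
  have h2 := ((ContinuousLinearMap.apply ℝ ℝ v).hasFDerivAt.comp x
    ((ContinuousLinearMap.apply ℝ (V4 →L[ℝ] ℝ) u).hasFDerivAt.comp (f := formClm Φ hΦ) x h1))
  have h3 : HasFDerivAt (fun y => Φ y u v)
      ((ContinuousLinearMap.apply ℝ ℝ v).comp
        ((ContinuousLinearMap.apply ℝ (V4 →L[ℝ] ℝ) u).comp (fderiv ℝ (formClm Φ hΦ) x))) x := h2
  rw [h3.fderiv]
  rfl

lemma hasFDerivAt_form (Φ : V4 → V4 → V4 → ℝ) (hΦ : IsSmoothTwoForm Φ)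
    (U V : V4 → V4) (x : V4) (hU : DifferentiableAt ℝ U x) (hV : DifferentiableAt ℝ V x) :
    HasFDerivAt (fun y => Φ y (U y) (V y))
      ((formClm Φ hΦ x (U x)).comp (fderiv ℝ V x) +
        (((formClm Φ hΦ x).comp (fderiv ℝ U x) +
          (fderiv ℝ (formClm Φ hΦ) x).flip (U x)).flip (V x))) x := by
  have h1 : HasFDerivAt (formClm Φ hΦ) (fderiv ℝ (formClm Φ hΦ) x) x :=
    ((formClm_contDiff Φ hΦ).differentiable (by simp) x).hasFDerivAt
  exact (h1.clm_apply hU.hasFDerivAt).clm_apply hV.hasFDerivAt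

lemma fderiv_form (Φ : V4 → V4 → V4 → ℝ) (hΦ : IsSmoothTwoForm Φ)
    (U V : V4 → V4) (x : V4) (hU : DifferentiableAt ℝ U x) (hV : DifferentiableAt ℝ V x)
    (z : V4) :
    fderiv ℝ (fun y => Φ y (U y) (V y)) x z =
      fderiv ℝ (fun y => Φ y (U x) (V x)) x z +
        Φ x (fderiv ℝ U x z) (V x) + Φ x (U x) (fderiv ℝ V x z) := by
  rw [(hasFDerivAt_form Φ hΦ U V x hU hV).fderiv]
  rw [← fderiv_formClm_apply Φ hΦ x (U x) (V x) z]
  simp only [ContinuousLinearMap.add_apply, ContinuousLinearMap.coe_comp', Function.comp_apply,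
    ContinuousLinearMap.flip_apply]
  rw [formClm_apply, formClm_apply]
  ring

/-- Decomposition of the invariant expression for `dΦ` on vector fields. -/
lemma D2decomp (Φ : V4 → V4 → V4 → ℝ) (hΦ : IsSmoothTwoForm Φ)
    (U V : V4 → V4) (x : V4) (hU : Differentiable ℝ U) (hV : Differentiable ℝ V) (w : V4) :
    fderiv ℝ (fun y => Φ y (V y) w) x (U x) - fderiv ℝ (fun y => Φ y (U y) w) x (V x)
      + fderiv ℝ (fun y => Φ y (U y) (V y)) x w
    = extD2 Φ x (U x) (V x) w + Φ x (vbracket U V x) w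
      + Φ x (fderiv ℝ U x w) (V x) + Φ x (U x) (fderiv ℝ V x w) := by
  have hcw : DifferentiableAt ℝ (fun _ : V4 => w) x := differentiableAt_const w
  have h1 := fderiv_form Φ hΦ V (fun _ => w) x (hV x) hcw (U x)
  have h2 := fderiv_form Φ hΦ U (fun _ => w) x (hU x) hcw (V x)
  have h3 := fderiv_form Φ hΦ U V x (hU x) (hV x) w
  rw [fderiv_fun_const] at h1 h2
  simp only [Pi.zero_apply, ContinuousLinearMap.zero_apply] at h1 h2
  rw [(hΦ.linear_right x (V x)).map_zero] at h1
  rw [(hΦ.linear_right x (U x)).map_zero] at h2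
  rw [h1, h2, h3, extD2, vbracket, (hΦ.linear_left x w).map_sub]
  ring

lemma Jfield_diff (J : V4 → V4 →ₗ[ℝ] V4) (hJsmooth : ∀ u, ContDiff ℝ (⊤ : ℕ∞) fun x => J x u)
    (X : V4 → V4) (hX : Differentiable ℝ X) : Differentiable ℝ (fun y => J y (X y)) := by
  have hrep : (fun y => J y (X y)) = fun y => ∑ j : Fin 4, X y j • J y (e4 j) := by
    funext y
    conv_lhs => rw [vec_rep (X y)]
    rw [map_sum]
    exact Finset.sum_congr rfl fun j _ => (J y).map_smul _ _
  rw [hrep]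
  exact Differentiable.fun_sum fun j _ =>
    (((ContinuousLinearMap.proj (R := ℝ) (φ := fun _ : Fin 4 => ℝ) j).differentiable).comp
      hX).smul ((hJsmooth (e4 j)).differentiable (by simp))

end Stmt8Aux

/-- Let `Φ` and `Ψ` be real `2`-forms on a `4`-manifold with
`Φ∧Φ = Ψ∧Ψ` nowhere zero and `Φ∧Ψ = 0`, and suppose `dΦ = τ∧Φ` and `dΨ = τ∧Ψ` for
some `1`-form `τ`.  Then the almost complex structure `J` defined by
`Ψ(·,·) = -Φ(J·,·)` is integrable, i.e. its Nijenhuis tensor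
`N(X,Y) = [JX,JY] - J[JX,Y] - J[X,JY] - [X,Y]` vanishes. -/
theorem stmt8 (Φ Ψ : V4 → V4 → V4 → ℝ)
    (hΦ : IsSmoothTwoForm Φ) (hΨ : IsSmoothTwoForm Ψ)
    (heq : ∀ x, wedge22 Φ Φ x = wedge22 Ψ Ψ x)
    (hne : ∀ x, wedge22 Φ Φ x ≠ 0)
    (horth : ∀ x, wedge22 Φ Ψ x = 0)
    (τ : V4 → V4 → ℝ) (hτlin : ∀ x, IsLinearMap ℝ (τ x))
    (hdΦ : ∀ x u v w, extD2 Φ x u v w = wedge12 τ Φ x u v w)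
    (hdΨ : ∀ x u v w, extD2 Ψ x u v w = wedge12 τ Ψ x u v w)
    (J : V4 → V4 →ₗ[ℝ] V4) (hJsmooth : ∀ u, ContDiff ℝ (⊤ : ℕ∞) fun x => J x u)
    (hJsq : ∀ x, J x ∘ₗ J x = -LinearMap.id)
    (hJdef : ∀ x u v, Ψ x u v = -Φ x (J x u) v) :
    ∀ X Y : V4 → V4, ContDiff ℝ (⊤ : ℕ∞) X → ContDiff ℝ (⊤ : ℕ∞) Y → ∀ x,
      vbracket (fun y => J y (X y)) (fun y => J y (Y y)) x -
        J x (vbracket (fun y => J y (X y)) Y x) -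
        J x (vbracket X (fun y => J y (Y y)) x) -
        vbracket X Y x = 0 := by
  intro X Y hX hY x
  -- pointwise identities
  have hJJ : ∀ y u, J y (J y u) = -u := by
    intro y u
    have := LinearMap.congr_fun (hJsq y) u
    simpa using this
  have gI1 : ∀ y u v, Φ y (J y u) v = -Ψ y u v := by
    intro y u v
    rw [hJdef]; ring
  have gI2 : ∀ y u v, Ψ y (J y u) v = Φ y u v := by
    intro y u v
    rw [hJdef, hJJ, (hΦ.linear_left y v).map_neg, neg_neg]
  have gI3 : ∀ y u v, Φ y u (J y v) = -Ψ y u v := by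
    intro y u v
    rw [hΦ.alt, gI1, hΨ.alt]; ring
  have gI4 : ∀ y u v, Ψ y u (J y v) = Φ y u v := by
    intro y u v
    rw [hΨ.alt, gI2, hΦ.alt]; ring
  have hI1 := gI1 x
  have hI2 := gI2 x
  have hI3 := gI3 x
  have hI4 := gI4 x
  -- differentiability
  have hXd : Differentiable ℝ X := hX.differentiable (by simp)
  have hYd : Differentiable ℝ Y := hY.differentiable (by simp)
  have hXJd : Differentiable ℝ (fun y => J y (X y)) := Jfield_diff J hJsmooth X hXd
  have hYJd : Differentiable ℝ (fun y => J y (Y y)) := Jfield_diff J hJsmooth Y hYd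
  -- the key pointwise identity
  have key : ∀ w : V4, Φ x (vbracket (fun y => J y (X y)) Y x
      + vbracket X (fun y => J y (Y y)) x
      + J x (vbracket (fun y => J y (X y)) (fun y => J y (Y y)) x - vbracket X Y x)) w = 0 := by
    intro w
    have d1 := D2decomp Ψ hΨ X Y x hXd hYd w
    have d2 := D2decomp Ψ hΨ (fun y => J y (X y)) (fun y => J y (Y y)) x hXJd hYJd w
    have d3 := D2decomp Φ hΦ (fun y => J y (X y)) Y x hXJd hYd w
    have d4 := D2decomp Φ hΦ X (fun y => J y (Y y)) x hXd hYJd w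
    beta_reduce at d2 d3 d4
    rw [hdΨ] at d1 d2
    rw [hdΦ] at d3 d4
    simp only [wedge12] at d1 d2 d3 d4
    simp only [hI1, hI2, hI3, hI4] at d1 d2 d3 d4
    -- way-2 identities (derivatives of identically-vanishing functions)
    have wA1 : fderiv ℝ (fun y => Ψ y (Y y) w) x (X x)
        = -(fderiv ℝ (fun y => Φ y (J y (Y y)) w) x (X x)) := by
      have h : (fun y => Ψ y (Y y) w) = fun y => -Φ y (J y (Y y)) w :=
        funext fun y => hJdef y (Y y) w
      rw [h, fderiv_fun_neg, ContinuousLinearMap.neg_apply]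
    have wA2 : fderiv ℝ (fun y => Ψ y (X y) w) x (Y x)
        = -(fderiv ℝ (fun y => Φ y (J y (X y)) w) x (Y x)) := by
      have h : (fun y => Ψ y (X y) w) = fun y => -Φ y (J y (X y)) w :=
        funext fun y => hJdef y (X y) w
      rw [h, fderiv_fun_neg, ContinuousLinearMap.neg_apply]
    have wA3 : fderiv ℝ (fun y => Ψ y (X y) (Y y)) x w
        = -(fderiv ℝ (fun y => Φ y (J y (X y)) (Y y)) x w) := by
      have h : (fun y => Ψ y (X y) (Y y)) = fun y => -Φ y (J y (X y)) (Y y) :=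
        funext fun y => hJdef y (X y) (Y y)
      rw [h, fderiv_fun_neg, ContinuousLinearMap.neg_apply]
    have wB1 : fderiv ℝ (fun y => Ψ y (J y (Y y)) w) x (J x (X x))
        = fderiv ℝ (fun y => Φ y (Y y) w) x (J x (X x)) := by
      have h : (fun y => Ψ y (J y (Y y)) w) = fun y => Φ y (Y y) w :=
        funext fun y => gI2 y (Y y) w
      rw [h]
    have wB2 : fderiv ℝ (fun y => Ψ y (J y (X y)) w) x (J x (Y x))
        = fderiv ℝ (fun y => Φ y (X y) w) x (J x (Y x)) := by
      have h : (fun y => Ψ y (J y (X y)) w) = fun y => Φ y (X y) w :=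
        funext fun y => gI2 y (X y) w
      rw [h]
    have wB3 : fderiv ℝ (fun y => Ψ y (J y (X y)) (J y (Y y))) x w
        = fderiv ℝ (fun y => Φ y (X y) (J y (Y y))) x w := by
      have h : (fun y => Ψ y (J y (X y)) (J y (Y y))) = fun y => Φ y (X y) (J y (Y y)) :=
        funext fun y => gI2 y (X y) (J y (Y y))
      rw [h]
    -- assemble
    have hPhiadd : ∀ a b : V4, Φ x (a + b) w = Φ x a w + Φ x b w :=
      fun a b => (hΦ.linear_left x w).map_add a b
    have hPsisub : ∀ a b : V4, Ψ x (a - b) w = Ψ x a w - Ψ x b w :=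
      fun a b => (hΨ.linear_left x w).map_sub a b
    rw [hPhiadd, hPhiadd, hI1, hPsisub]
    linear_combination -d1 + d2 - d3 - d4 + wA1 - wA2 + wA3 - wB1 + wB2 - wB3
  -- nondegeneracy of Φ at x
  have hpf : (Φ x (e4 0) (e4 1) * Φ x (e4 2) (e4 3) - Φ x (e4 0) (e4 2) * Φ x (e4 1) (e4 3) +
      Φ x (e4 0) (e4 3) * Φ x (e4 1) (e4 2)) ≠ 0 := by
    intro h
    apply hne x
    simp only [wedge22]
    simp only [e4] at h
    linear_combination 2 * h
  have hv := form_nondeg Φ hΦ x hpf _ key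
  have h5 := congrArg (J x) hv
  rw [map_add, map_add, map_zero, hJJ] at h5
  have h7 : vbracket (fun y => J y (X y)) (fun y => J y (Y y)) x -
      J x (vbracket (fun y => J y (X y)) Y x) -
      J x (vbracket X (fun y => J y (Y y)) x) -
      vbracket X Y x
      = -(J x (vbracket (fun y => J y (X y)) Y x) + J x (vbracket X (fun y => J y (Y y)) x) +
        -(vbracket (fun y => J y (X y)) (fun y => J y (Y y)) x - vbracket X Y x)) := by
    abel
  rw [h7, h5, neg_zero]
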